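/- arXiv:dg-ga/9408001 — 3 statements merged into one kernel-verified Lean document; each statement's English description precedes it below -/
import Mathlib

section
/- Let K be a compact Lie group acting on a finite-dimensional complex inner product space V by unitary transformations, with Lie algebra 𝔨 acting by skew-Hermitian operators. Define the momentum map Φ : V → 𝔨* by Φ(v)(ξ) = (i/2)⟨ξv, v⟩. Suppose v ∈ V and μ = Φ(v) satisfy 𝔨_μ = [𝔨_μ, 𝔨_μ] + 𝔨_v, where 𝔨_μ is the coadjoint stabilizer algebra of μ and 𝔨_v = {ξ ∈ 𝔨 : ξv = 0}. Then μ = 0. -/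
/-!
The real trace form `B(ξ, η) = Re tr(π ξ ∘ π η)` of the representation is ad-invariant, and since
each `π ξ` is skew-Hermitian, `B(ξ, ξ) = -‖π ξ‖²_HS` vanishes only when `π ξ = 0`. As `μ` kills
`ker π`, it is represented as `μ = B(·, X)`. Invariance gives `μ⁅X, η⁆ = -B(η, ⁅X, X⁆) = 0`, so
`X ∈ 𝔨_μ`, and the hypothesis `𝔨_μ = [𝔨_μ, 𝔨_μ] + 𝔨_v` forces `μ` to vanish on `𝔨_μ`. Hence
`B(X, X) = μ(X) = 0`, so `π X = 0` and `μ = B(·, X) = 0`.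
-/

open LinearMap (BilinForm)

theorem LinearMap.mem_range_flip_of_ker_le {K M : Type*} [Field K] [AddCommGroup M] [Module K M]
    [FiniteDimensional K M] (B : M →ₗ[K] M →ₗ[K] K) {f : Module.Dual K M}
    (hf : ∀ w, B w = 0 → f w = 0) : f ∈ LinearMap.range B.flip := by
  have hf_dual : f ∈ LinearMap.range B.dualMap := by
    rw [LinearMap.range_dualMap_eq_dualAnnihilator_ker, Submodule.mem_dualAnnihilator]
    exact hf
  obtain ⟨ψ, rfl⟩ := hf_dual
  refine ⟨(Module.evalEquiv K M).symm ψ, LinearMap.ext fun η => ?_⟩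
  exact Module.apply_evalEquiv_symm_apply K M (B η) ψ

theorem LinearMap.BilinForm.dual_eq_zero_of_lieInvariant {K L : Type*} [Field K] [LieRing L]
    [LieAlgebra K L] [FiniteDimensional K L] {B : BilinForm K L} (hB : B.lieInvariant L)
    (hB_self : ∀ w, B w w = 0 → B.flip w = 0) {f : Module.Dual K L}
    (hf_ker : ∀ w, B w = 0 → f w = 0) (hf_stab : ∀ ξ, (∀ η, f ⁅ξ, η⁆ = 0) → f ξ = 0) :
    f = 0 := by
  obtain ⟨X, rfl⟩ := B.mem_range_flip_of_ker_le hf_ker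
  have hX : ∀ η, B.flip X ⁅X, η⁆ = 0 := fun η => by
    rw [B.flip_apply, hB, lie_self, map_zero, neg_zero]
  exact hB_self X (hf_stab X hX)

section TraceForm

variable {V : Type*} [NormedAddCommGroup V] [InnerProductSpace ℂ V]

theorem LinearMap.eq_zero_of_re_trace_comp_self_eq_zero [FiniteDimensional ℂ V] {T : V →ₗ[ℂ] V}
    (hT : ∀ x y, inner ℂ (T x) y = -inner ℂ x (T y))
    (h : (LinearMap.trace ℂ V (T ∘ₗ T)).re = 0) : T = 0 := by
  let b := stdOrthonormalBasis ℂ V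
  have hsum : (LinearMap.trace ℂ V (T ∘ₗ T)).re = -∑ i, ‖T (b i)‖ ^ 2 := by
    rw [LinearMap.trace_eq_sum_inner _ b, Complex.re_sum, ← Finset.sum_neg_distrib]
    refine Finset.sum_congr rfl fun i _ => ?_
    rw [LinearMap.comp_apply, ← neg_eq_iff_eq_neg, ← Complex.neg_re, ← hT,
      inner_self_eq_norm_sq_to_K]
    norm_cast
  rw [hsum, neg_eq_zero, Finset.sum_eq_zero_iff_of_nonneg fun i _ => sq_nonneg _] at h
  exact b.toBasis.ext fun i => by simpa using h i (Finset.mem_univ i)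

variable {L : Type*} [LieRing L] [LieAlgebra ℝ L]

noncomputable def reTraceForm (π : L →ₗ[ℝ] V →ₗ[ℂ] V) : BilinForm ℝ L :=
  ((LinearMap.mul ℝ (Module.End ℂ V)).compr₂
    (Complex.reLm ∘ₗ (LinearMap.trace ℂ V).restrictScalars ℝ)).compl₁₂ π π

theorem reTraceForm_apply (π : L →ₗ[ℝ] V →ₗ[ℂ] V) (ξ η : L) :
    reTraceForm π ξ η = (LinearMap.trace ℂ V (π ξ ∘ₗ π η)).re := rfl

theorem reTraceForm_lieInvariant [FiniteDimensional ℂ V] {π : L →ₗ[ℝ] V →ₗ[ℂ] V}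
    (hπ : ∀ ξ η : L, π ⁅ξ, η⁆ = π ξ ∘ₗ π η - π η ∘ₗ π ξ) : (reTraceForm π).lieInvariant L := by
  intro x y z
  have hcyc : LinearMap.trace ℂ V (π x ∘ₗ π y ∘ₗ π z) =
      LinearMap.trace ℂ V (π y ∘ₗ π z ∘ₗ π x) :=
    LinearMap.trace_comp_comm' (π y ∘ₗ π z) (π x)
  simp only [reTraceForm_apply, hπ, LinearMap.sub_comp, LinearMap.comp_sub, LinearMap.comp_assoc,
    map_sub, Complex.sub_re, hcyc]
  ring

theorem apply_eq_zero_of_reTraceForm_self_eq_zero [FiniteDimensional ℂ V]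
    {π : L →ₗ[ℝ] V →ₗ[ℂ] V} (hskew : ∀ (ξ : L) (x y : V), inner ℂ (π ξ x) y = -inner ℂ x (π ξ y))
    {ξ : L} (h : reTraceForm π ξ ξ = 0) : π ξ = 0 :=
  LinearMap.eq_zero_of_re_trace_comp_self_eq_zero (hskew ξ) h

end TraceForm

section Momentum

variable {L V : Type*} [LieRing L] [LieAlgebra ℝ L] [NormedAddCommGroup V] [InnerProductSpace ℂ V]

noncomputable def momentumMap (π : L →ₗ[ℝ] V →ₗ[ℂ] V) (v : V) : Module.Dual ℝ L :=
  Complex.reLm ∘ₗ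
    ((Complex.I / 2) • (innerₛₗ ℂ v ∘ₗ LinearMap.applyₗ v)).restrictScalars ℝ ∘ₗ π

theorem momentumMap_apply (π : L →ₗ[ℝ] V →ₗ[ℂ] V) (v : V) (ξ : L) :
    momentumMap π v ξ = (Complex.I / 2 * inner ℂ v (π ξ v)).re := rfl

theorem momentumMap_apply_eq_zero {π : L →ₗ[ℝ] V →ₗ[ℂ] V} {v : V} {ξ : L} (h : π ξ v = 0) :
    momentumMap π v ξ = 0 := by
  simp [momentumMap_apply, h]

end Momentum

theorem momentum_value_zero_of_stabilizer_condition_general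
    {𝔨 V : Type*} [LieRing 𝔨] [LieAlgebra ℝ 𝔨]
    [FiniteDimensional ℝ 𝔨]
    [NormedAddCommGroup V] [InnerProductSpace ℂ V] [FiniteDimensional ℂ V]
    (π : 𝔨 →ₗ[ℝ] (V →ₗ[ℂ] V))
    (hπ : ∀ ξ η : 𝔨, π ⁅ξ, η⁆ = π ξ ∘ₗ π η - π η ∘ₗ π ξ)
    (hskew : ∀ (ξ : 𝔨) (x y : V), (inner ℂ (π ξ x) y : ℂ) = -(inner ℂ x (π ξ y) : ℂ))
    (v : V) (μ : 𝔨 → ℝ)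
    -- `μ(ξ) = (i/2)⟨ξv, v⟩`, the inner product being conjugate-linear in the
    -- second variable (so `⟨ξv, v⟩` is Mathlib's `inner v (ξv)`)
    (hμ : ∀ ξ : 𝔨, μ ξ = ((Complex.I / 2) * (inner ℂ v (π ξ v) : ℂ)).re)
    -- `𝔨_μ = [𝔨_μ, 𝔨_μ] + 𝔨_v`
    (hcond : ∀ ξ : 𝔨, (∀ η : 𝔨, μ ⁅ξ, η⁆ = 0) →
      ∃ χ ζ η' : 𝔨, (∀ a : 𝔨, μ ⁅χ, a⁆ = 0) ∧ (∀ a : 𝔨, μ ⁅ζ, a⁆ = 0) ∧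
        π η' v = 0 ∧ ξ = ⁅χ, ζ⁆ + η') :
    ∀ ξ : 𝔨, μ ξ = 0 := by
  obtain rfl : μ = momentumMap π v := funext fun ξ => (hμ ξ).trans (momentumMap_apply π v ξ).symm
  have hstab : ∀ ξ, (∀ η, momentumMap π v ⁅ξ, η⁆ = 0) → momentumMap π v ξ = 0 := by
    intro ξ hξ
    obtain ⟨χ, ζ, η', hχ, -, hη', rfl⟩ := hcond ξ hξ
    rw [map_add, hχ ζ, momentumMap_apply_eq_zero hη', zero_add]
  have hker : ∀ w, reTraceForm π w = 0 → π w = 0 := fun w hw =>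
    apply_eq_zero_of_reTraceForm_self_eq_zero hskew (by rw [hw, LinearMap.zero_apply])
  have hflip : ∀ w, π w = 0 → (reTraceForm π).flip w = 0 := fun w hw =>
    LinearMap.ext fun η => by simp [reTraceForm_apply, hw]
  have hzero : momentumMap π v = 0 :=
    (reTraceForm π).dual_eq_zero_of_lieInvariant (reTraceForm_lieInvariant hπ)
      (fun w hw => hflip w (apply_eq_zero_of_reTraceForm_self_eq_zero hskew hw))
      (fun w hw => momentumMap_apply_eq_zero (by rw [hker w hw, LinearMap.zero_apply])) hstab
  exact LinearMap.congr_fun hzero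

/-- Lemma 6.8: if the momentum map value `μ = Φ(v)` of a unitary (skew-Hermitian)
Lie algebra action satisfies `𝔨_μ = [𝔨_μ, 𝔨_μ] + 𝔨_v`, then `μ = 0`.  Compactness of
the group is encoded by an ad-invariant inner product on the Lie algebra `𝔨`. -/
theorem momentum_value_zero_of_stabilizer_condition
    {𝔨 V : Type*} [LieRing 𝔨] [LieAlgebra ℝ 𝔨]
    [NormedAddCommGroup 𝔨] [InnerProductSpace ℝ 𝔨] [FiniteDimensional ℝ 𝔨]
    [NormedAddCommGroup V] [InnerProductSpace ℂ V] [FiniteDimensional ℂ V]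
    (hinv : ∀ ξ η ζ : 𝔨, (inner ℝ (⁅ξ, η⁆ : 𝔨) ζ : ℝ) = -(inner ℝ η (⁅ξ, ζ⁆ : 𝔨) : ℝ))
    (π : 𝔨 →ₗ[ℝ] (V →ₗ[ℂ] V))
    (hπ : ∀ ξ η : 𝔨, π ⁅ξ, η⁆ = π ξ ∘ₗ π η - π η ∘ₗ π ξ)
    (hskew : ∀ (ξ : 𝔨) (x y : V), (inner ℂ (π ξ x) y : ℂ) = -(inner ℂ x (π ξ y) : ℂ))
    (v : V) (μ : 𝔨 → ℝ)
    -- `μ(ξ) = (i/2)⟨ξv, v⟩`, the inner product being conjugate-linear in the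
    -- second variable (so `⟨ξv, v⟩` is Mathlib's `inner v (ξv)`)
    (hμ : ∀ ξ : 𝔨, μ ξ = ((Complex.I / 2) * (inner ℂ v (π ξ v) : ℂ)).re)
    -- `𝔨_μ = [𝔨_μ, 𝔨_μ] + 𝔨_v`
    (hcond : ∀ ξ : 𝔨, (∀ η : 𝔨, μ ⁅ξ, η⁆ = 0) →
      ∃ χ ζ η' : 𝔨, (∀ a : 𝔨, μ ⁅χ, a⁆ = 0) ∧ (∀ a : 𝔨, μ ⁅ζ, a⁆ = 0) ∧
        π η' v = 0 ∧ ξ = ⁅χ, ζ⁆ + η') :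
    ∀ ξ : 𝔨, μ ξ = 0 :=
  momentum_value_zero_of_stabilizer_condition_general π hπ hskew v μ hμ hcond
end

section
/- Let A = ℂ[x,y]/(x^n) be graded by total degree and let an action of S¹ have weight kλ on the monomial x^k y^l (λ a fixed nonzero weight). Then the set {kλ/(k+l) : k,l ∈ ℕ, k < n, (k,l) ≠ (0,0), and x^k y^l ≠ 0 in A} equals {(k/(k+l))λ : 0 ≤ k < n, k+l > 0}, and for n ≥ 2 this set cannot be written as a finite union of convex subsets of ℚλ ≅ ℚ. -/
/-!
A monomial `x^k y^l` with `k < n` is not divisible by `x^n`, so the two sets agree.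
Every ratio `1/(j+1)` occurs (take `k = 1`), so by pigeonhole a finite convex cover would put two
terms `λ/(i+1)`, `λ/(j+1)` with `i < j`, and hence the segment between them, in one convex piece.
But for `n ≥ 2`, `n/(n(i+1)+1)` lies strictly between `1/(i+2)` and `1/(i+1)`, and it is no
`k/(k+l)` with `k < n`: clearing denominators forces `n ∣ k`, so `k = 0` and then `l = 0`.
-/

open MvPolynomial

theorem mk_X_pow_mul_X_pow_ne_zero {R σ : Type*} [CommRing R] [Nontrivial R] {i j : σ}
    (hij : i ≠ j) {n k : ℕ} (hk : k < n) (l : ℕ) :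
    Ideal.Quotient.mk (Ideal.span {(X i ^ n : MvPolynomial σ R)}) (X i ^ k * X j ^ l) ≠ 0 := by
  rw [Ne, Ideal.Quotient.eq_zero_iff_mem, Ideal.mem_span_singleton, X_pow_eq_monomial,
    X_pow_eq_monomial, X_pow_eq_monomial, monomial_mul, monomial_dvd_monomial]
  rintro ⟨h | h, -⟩
  · exact one_ne_zero (mul_one (1 : R) ▸ h)
  · exact hk.not_ge (by simpa [Finsupp.single_apply, hij.symm] using h i)

theorem not_eq_iUnion_convex_of_segment_gaps {𝕜 E ι : Type*} [Semiring 𝕜] [PartialOrder 𝕜]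
    [AddCommMonoid E] [Module 𝕜 E] [Finite ι] {S : Set E} (p : ℕ → E) (hp : ∀ j, p j ∈ S)
    (hgap : ∀ i j, i < j → ∃ w ∈ segment 𝕜 (p i) (p j), w ∉ S)
    (C : ι → Set E) (hC : ∀ i, Convex 𝕜 (C i)) : S ≠ ⋃ i, C i := by
  intro hS
  have hcover : ∀ j, ∃ i, p j ∈ C i := fun j => Set.mem_iUnion.mp (hS ▸ hp j)
  choose f hf using hcover
  obtain ⟨i, j, hne, hfij⟩ := Finite.exists_ne_map_eq_of_infinite f
  wlog hlt : i < j generalizing i j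
  · exact this j i hne.symm hfij.symm (hne.symm.lt_of_le (not_lt.mp hlt))
  obtain ⟨w, hw, hwS⟩ := hgap i j hlt
  have hwC : w ∈ C (f i) := (hC (f i)).segment_subset (hf i) (hfij ▸ hf j) hw
  exact hwS (hS ▸ Set.mem_iUnion.mpr ⟨f i, hwC⟩)

theorem mul_right_mem_segment {𝕜 : Type*} [CommRing 𝕜] [PartialOrder 𝕜] [IsOrderedRing 𝕜]
    {a b c : 𝕜} (r : 𝕜) (h : c ∈ segment 𝕜 a b) : c * r ∈ segment 𝕜 (a * r) (b * r) := by
  simpa using (image_segment 𝕜 (LinearMap.mulRight 𝕜 r).toAffineMap a b).subset ⟨c, h, rfl⟩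

theorem div_mul_add_one_add_one_ne_div_add {n k l : ℕ} (j : ℕ) (hk : k < n) (hkl : 0 < k + l) :
    (n : ℚ) / (n * (j + 1) + 1) ≠ k / (k + l) := by
  have hkl' : (k : ℚ) + l ≠ 0 := by exact_mod_cast hkl.ne'
  rw [Ne, div_eq_div_iff (by positivity) hkl']
  intro h
  have hnat : n * (k + l) = k * (n * (j + 1) + 1) := by exact_mod_cast h
  have hdvd : n ∣ k := by
    have : n ∣ k * (n * (j + 1)) + k := ⟨k + l, by rw [hnat]; ring⟩
    exact (Nat.dvd_add_right ⟨k * (j + 1), by ring⟩).mp this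
  obtain rfl : k = 0 := Nat.eq_zero_of_dvd_of_lt hdvd hk
  simp only [zero_add, zero_mul, mul_eq_zero] at hnat
  omega

theorem div_mul_add_one_add_one_mem_Ioo {n : ℕ} (hn : 2 ≤ n) (j : ℕ) :
    (n : ℚ) / (n * (j + 1) + 1) ∈ Set.Ioo (1 / (j + 2) : ℚ) (1 / (j + 1)) := by
  have hn' : (2 : ℚ) ≤ n := by exact_mod_cast hn
  constructor
  · rw [div_lt_div_iff₀ (by positivity) (by positivity)]
    nlinarith
  · rw [div_lt_div_iff₀ (by positivity) (by positivity)]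
    nlinarith

def weightSet (n : ℕ) (lam : ℚ) : Set ℚ :=
  {q | ∃ k l : ℕ, k < n ∧ 0 < k + l ∧ q = (k : ℚ) / (k + l) * lam}

theorem one_div_add_one_mul_mem_weightSet {n : ℕ} (hn : 1 < n) (lam : ℚ) (j : ℕ) :
    1 / (j + 1) * lam ∈ weightSet n lam :=
  ⟨1, j, hn, by omega, by push_cast; ring_nf⟩

theorem exists_mem_segment_notMem_weightSet {n : ℕ} (hn : 2 ≤ n) {lam : ℚ} (hlam : lam ≠ 0)
    {i j : ℕ} (hij : i < j) :
    ∃ w ∈ segment ℚ (1 / (i + 1) * lam) (1 / (j + 1) * lam), w ∉ weightSet n lam := by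
  obtain ⟨hlo, hhi⟩ := div_mul_add_one_add_one_mem_Ioo hn i
  have hj : (1 : ℚ) / (j + 1) ≤ 1 / (i + 2) :=
    one_div_le_one_div_of_le (by positivity) (by exact_mod_cast (show i + 2 ≤ j + 1 by omega))
  refine ⟨(n : ℚ) / (n * (i + 1) + 1) * lam, mul_right_mem_segment lam ?_, ?_⟩
  · rw [segment_eq_uIcc]
    exact Set.mem_uIcc.mpr (Or.inr ⟨(hj.trans hlo.le), hhi.le⟩)
  · rintro ⟨k, l, hk, hkl, h⟩
    exact div_mul_add_one_add_one_ne_div_add i hk hkl (mul_right_cancel₀ hlam h)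

/-- Example 3.6: for `A = ℂ[x,y]/(xⁿ)` with the `S¹`-action of weight `kλ` on
`x^k y^l`, the highest-weight set `{kλ/(k+l)}` over nonzero monomials of positive
degree equals `{(k/(k+l))λ : k < n, k+l > 0}`, and for `n ≥ 2` this set is not a
finite union of convex subsets of `ℚλ ≅ ℚ`. -/
theorem highest_weight_set_unreduced_example
    (n : ℕ) (hn : 2 ≤ n) (lam : ℚ) (hlam : lam ≠ 0) :
    ({q : ℚ | ∃ k l : ℕ, k < n ∧ (k, l) ≠ (0, 0) ∧
        Ideal.Quotient.mk (Ideal.span {(X 0 ^ n : MvPolynomial (Fin 2) ℂ)})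
          (X 0 ^ k * X 1 ^ l) ≠ 0 ∧
        q = ((k : ℚ) / ((k : ℚ) + (l : ℚ))) * lam} =
      {q : ℚ | ∃ k l : ℕ, k < n ∧ 0 < k + l ∧
        q = ((k : ℚ) / ((k : ℚ) + (l : ℚ))) * lam}) ∧
    ¬ ∃ (m : ℕ) (C : Fin m → Set ℚ), (∀ i, Convex ℚ (C i)) ∧
        {q : ℚ | ∃ k l : ℕ, k < n ∧ 0 < k + l ∧
          q = ((k : ℚ) / ((k : ℚ) + (l : ℚ))) * lam} = ⋃ i, C i := by
  refine ⟨?_, ?_⟩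
  · ext q
    constructor
    · rintro ⟨k, l, hk, hne, -, hq⟩
      refine ⟨k, l, hk, ?_, hq⟩
      simp only [Ne, Prod.mk.injEq] at hne
      omega
    · rintro ⟨k, l, hk, hkl, hq⟩
      refine ⟨k, l, hk, ?_, mk_X_pow_mul_X_pow_ne_zero (by decide) hk l, hq⟩
      simp only [Ne, Prod.mk.injEq]
      omega
  · rintro ⟨m, C, hC, hS⟩
    exact not_eq_iUnion_convex_of_segment_gaps (fun j : ℕ => 1 / (j + 1) * lam)
      (one_div_add_one_mul_mem_weightSet (by omega) lam)
      (fun _ _ hij => exists_mem_segment_notMem_weightSet hn hlam hij) C hC hS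
end

section
/- Properness of the momentum map on orbits (Lemma 4.7, diagonal version): Let β₁,…,β_d be linear functionals on a finite-dimensional real vector space 𝔱 and ρ > 0. Suppose sequences ξ(n) ∈ 𝔱 and v_i(n) ∈ ℂ with |v_i(n)| ≤ ρ satisfy f(n) = Σ_i e^{2β_i(ξ(n))}|v_i(n)|² → ∞. Then there is a subsequence and a unit vector η ∈ 𝔱 such that (1/2) Σ_i β_i(η) e^{2β_i(ξ(n))}|v_i(n)|² → ∞ along the subsequence. -/
open Filter Topology

/-!
Pass to a subsequence along which each term `e^{2β_i(ξ)}|v_i|²` either tends to `∞` or converges;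
the set `I` of indices of the first kind is nonempty because the sum tends to `∞`. Since
`|v_i| ≤ ρ`, `β_i(ξ(n)) → ∞` for `i ∈ I`, so for `N` large the unit vector `η` along `ξ(φ N)` has
`β_i(η) > 0` for all `i ∈ I`. In the weighted sum the terms with `i ∈ I` then tend to `∞` while
the others converge.
-/

theorem Filter.tendsto_atTop_finsetSum_of_isBoundedUnder_ge {α ι R : Type*} [AddCommGroup R]
    [PartialOrder R] [IsOrderedAddMonoid R] {l : Filter α} {s : Finset ι} {f : ι → α → R}
    {i₀ : ι} (hi₀ : i₀ ∈ s) (h₀ : Tendsto (f i₀) l atTop)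
    (hbdd : ∀ i ∈ s, IsBoundedUnder (· ≥ ·) l (f i)) :
    Tendsto (fun x => ∑ i ∈ s, f i x) l atTop := by
  classical
  obtain ⟨C, hC⟩ := isBoundedUnder_ge_sum (s.erase i₀) fun i hi =>
    hbdd i (Finset.mem_of_mem_erase hi)
  simp_rw [← Finset.add_sum_erase s _ hi₀]
  exact tendsto_atTop_add_right_of_le' l C h₀ (by simpa using hC)

theorem exists_strictMono_tendsto_atTop_or_tendsto_nhds {ι : Type*} [Countable ι]
    {t : ι → ℕ → ℝ} (ht : ∀ i n, 0 ≤ t i n) :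
    ∃ φ : ℕ → ℕ, StrictMono φ ∧
      ∀ i, Tendsto (t i ∘ φ) atTop atTop ∨ ∃ c, Tendsto (t i ∘ φ) atTop (𝓝 c) := by
  obtain ⟨L, φ, hφ, hL⟩ := CompactSpace.tendsto_subseq fun n i => ENNReal.ofReal (t i n)
  refine ⟨φ, hφ, fun i => ?_⟩
  have hLi : Tendsto (fun n => ENNReal.ofReal (t i (φ n))) atTop (𝓝 (L i)) :=
    tendsto_pi_nhds.mp hL i
  by_cases hi : L i = ⊤
  · exact .inl (ENNReal.tendsto_ofReal_nhds_top.mp (hi ▸ hLi))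
  · exact .inr ⟨(L i).toReal, ((ENNReal.tendsto_toReal hi).comp hLi).congr fun n =>
      ENNReal.toReal_ofReal (ht i (φ n))⟩

theorem Real.tendsto_atTop_of_tendsto_exp_mul_atTop {α : Type*} {l : Filter α} {a b : α → ℝ}
    {B : ℝ} (hB : 0 < B) (hb : ∀ x, b x ≤ B)
    (h : Tendsto (fun x => Real.exp (a x) * b x) l atTop) : Tendsto a l atTop :=
  Real.tendsto_exp_comp_atTop.mp <| Tendsto.atTop_of_mul_const₀ hB <|
    tendsto_atTop_mono (fun x => mul_le_mul_of_nonneg_left (hb x) (Real.exp_pos _).le) h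

theorem exists_norm_eq_one_forall_pos {E ι : Type*} [NormedAddCommGroup E] [NormedSpace ℝ E]
    {s : Finset ι} (hs : s.Nonempty) (β : ι → E →ₗ[ℝ] ℝ) {x : E} (hx : ∀ i ∈ s, 0 < β i x) :
    ∃ η : E, ‖η‖ = 1 ∧ ∀ i ∈ s, 0 < β i η := by
  obtain ⟨i₀, hi₀⟩ := hs
  have hx₀ : x ≠ 0 := by
    rintro rfl
    simpa using hx i₀ hi₀
  refine ⟨(‖x‖⁻¹ : ℝ) • x, norm_smul_inv_norm hx₀, fun i hi => ?_⟩
  rw [map_smul, smul_eq_mul]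
  exact mul_pos (inv_pos.mpr (norm_pos_iff.mpr hx₀)) (hx i hi)

theorem momentum_unbounded_along_subsequence_general
    {𝔱 : Type*} [NormedAddCommGroup 𝔱] [InnerProductSpace ℝ 𝔱]
    {d : ℕ} (β : Fin d → (𝔱 →ₗ[ℝ] ℝ)) (ρ : ℝ) (hρ : 0 < ρ)
    (ξ : ℕ → 𝔱) (v : Fin d → ℕ → ℂ)
    (hbound : ∀ i n, ‖v i n‖ ≤ ρ)
    (hf : Tendsto (fun n => ∑ i, Real.exp (2 * β i (ξ n)) * ‖v i n‖ ^ 2)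
      atTop atTop) :
    ∃ φ : ℕ → ℕ, StrictMono φ ∧ ∃ η : 𝔱, ‖η‖ = 1 ∧
      Tendsto
        (fun n => (1 / 2) * ∑ i, β i η * Real.exp (2 * β i (ξ (φ n))) *
          ‖v i (φ n)‖ ^ 2)
        atTop atTop := by
  classical
  set t : Fin d → ℕ → ℝ := fun i n => Real.exp (2 * β i (ξ n)) * ‖v i n‖ ^ 2
  obtain ⟨φ, hφ, htφ⟩ := exists_strictMono_tendsto_atTop_or_tendsto_nhds (t := t)
    fun i n => by positivity
  set I := Finset.univ.filter fun i => Tendsto (t i ∘ φ) atTop atTop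
  have mem_I : ∀ i, i ∈ I ↔ Tendsto (t i ∘ φ) atTop atTop := Finset.mem_filter_univ
  have hI : I.Nonempty := by
    by_contra hI
    choose c hc using fun i => (htφ i).resolve_left fun h => hI ⟨i, (mem_I i).2 h⟩
    exact not_tendsto_atTop_of_tendsto_nhds (tendsto_finsetSum _ fun i _ => hc i)
      (hf.comp hφ.tendsto_atTop)
  have hβ : ∀ i ∈ I, Tendsto (fun n => 2 * β i (ξ (φ n))) atTop atTop := fun i hi =>
    Real.tendsto_atTop_of_tendsto_exp_mul_atTop (pow_pos hρ 2)
      (fun n => pow_le_pow_left₀ (norm_nonneg _) (hbound i (φ n)) 2) ((mem_I i).1 hi)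
  obtain ⟨N, hN⟩ := ((eventually_all_finset I).2 fun i hi =>
    (hβ i hi).eventually_gt_atTop 0).exists
  obtain ⟨η, hη, hβη⟩ := exists_norm_eq_one_forall_pos hI β (x := ξ (φ N)) fun i hi => by
    linarith [hN i hi]
  refine ⟨φ, hφ, η, hη, Tendsto.const_mul_atTop one_half_pos ?_⟩
  obtain ⟨i₀, hi₀⟩ := hI
  simp_rw [mul_assoc]
  refine tendsto_atTop_finsetSum_of_isBoundedUnder_ge (Finset.mem_univ i₀)
    (((mem_I i₀).1 hi₀).const_mul_atTop (hβη i₀ hi₀)) fun i _ => ?_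
  by_cases hi : i ∈ I
  · exact (((mem_I i).1 hi).const_mul_atTop (hβη i hi)).isBoundedUnder_ge_atTop
  · obtain ⟨c, hc⟩ := (htφ i).resolve_left fun h => hi ((mem_I i).2 h)
    exact (hc.const_mul (β i η)).isBoundedUnder_ge

/-- Computational core of Lemma 4.7: if the weighted exponential sums
`Σ_i e^{2β_i(ξ(n))}|v_i(n)|²` tend to infinity, with bounded coefficients
`|v_i(n)| ≤ ρ`, then along a subsequence there is a unit vector `η` such that
`(1/2) Σ_i β_i(η) e^{2β_i(ξ(n))}|v_i(n)|²` tends to infinity. -/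
theorem momentum_unbounded_along_subsequence
    {𝔱 : Type*} [NormedAddCommGroup 𝔱] [InnerProductSpace ℝ 𝔱] [FiniteDimensional ℝ 𝔱]
    {d : ℕ} (β : Fin d → (𝔱 →ₗ[ℝ] ℝ)) (ρ : ℝ) (hρ : 0 < ρ)
    (ξ : ℕ → 𝔱) (v : Fin d → ℕ → ℂ)
    (hbound : ∀ i n, ‖v i n‖ ≤ ρ)
    (hf : Tendsto (fun n => ∑ i, Real.exp (2 * β i (ξ n)) * ‖v i n‖ ^ 2)
      atTop atTop) :
    ∃ φ : ℕ → ℕ, StrictMono φ ∧ ∃ η : 𝔱, ‖η‖ = 1 ∧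
      Tendsto
        (fun n => (1 / 2) * ∑ i, β i η * Real.exp (2 * β i (ξ (φ n))) *
          ‖v i (φ n)‖ ^ 2)
        atTop atTop :=
  momentum_unbounded_along_subsequence_general β ρ hρ ξ v hbound hf
end
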